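/- Let K be a field, E a finite-dimensional K-vector space, N ≥ 1 and r ≥ 1 integers, and R a subspace of E^⊗N. If R ⊗ E^⊗r = E^⊗r ⊗ R as subspaces of E^⊗(N+r) (under the canonical associativity identifications), then R = 0 or R = E^⊗N. -/

import Mathlib

open TensorProduct

variable (K : Type*) [Field K] (E : Type*) [AddCommGroup E] [Module K E]

/-- The subspace `R ⊗ E^⊗r` of `E^⊗(N+r)`: the image of the canonical map
`R ⊗ E^⊗r → E^⊗N ⊗ E^⊗r ≅ E^⊗(N+r)` induced by the inclusion of `R`. -/
noncomputable def subRight {N : ℕ} (R : Submodule K (⨂[K]^N E)) (r : ℕ) :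
    Submodule K (⨂[K]^(N + r) E) :=
  LinearMap.range ((TensorPower.mulEquiv (n := N) (m := r)).toLinearMap
    ∘ₗ LinearMap.rTensor (⨂[K]^r E) R.subtype)

/-- The subspace `E^⊗r ⊗ R` of `E^⊗(N+r)`: the image of the canonical map
`E^⊗r ⊗ R → E^⊗r ⊗ E^⊗N ≅ E^⊗(r+N) ≅ E^⊗(N+r)` induced by the inclusion of `R`. -/
noncomputable def subLeft {N : ℕ} (R : Submodule K (⨂[K]^N E)) (r : ℕ) :
    Submodule K (⨂[K]^(N + r) E) :=
  LinearMap.range ((TensorPower.cast K E (add_comm r N)).toLinearMap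
    ∘ₗ (TensorPower.mulEquiv (n := r) (m := N)).toLinearMap
    ∘ₗ LinearMap.lTensor (⨂[K]^r E) R.subtype)

/-!
Work in the graded algebra `𝒯 = ⨁ n, E^⊗n`, where the associativity identifications become
equalities. Writing `T n` for the degree-`n` piece, `R ⊗ E^⊗r = E^⊗r ⊗ R` says that `R` commutes
with `T r`, hence with `(T r)^(N+1) = T (N + s)`, where `N + s = r (N + 1)`. Pick `x ∈ R` and a
functional `f` with `f x = 1`. Contracting the first `N` tensor factors against `f` maps
`R · T (N + s)` onto `T (N + s)`, and maps `T (N + s) · R = T N · (T s · R)` into `T s · R`.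
Hence `T (N + s) ≤ T s · R`, and counting dimensions gives `dim R ≥ (dim E)^N = dim E^⊗N`.
-/

theorem Submodule.finrank_mul_le {S : Type*} [Semiring S] [Algebra K S] (M P : Submodule K S)
    [Module.Free K M] [Module.Free K P] [Module.Finite K M] [Module.Finite K P] :
    Module.finrank K ↥(M * P) ≤ Module.finrank K M * Module.finrank K P := by
  rw [← Submodule.mulMap_range, ← Module.finrank_tensorProduct]
  exact LinearMap.finrank_range_le _

local notation "𝒯" => DirectSum ℕ (TensorPower K · E)
local notation "ι" => DirectSum.lof K ℕ (TensorPower K · E)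

namespace TensorPower

variable {K E}

theorem lof_mul_lof {a b : ℕ} (x : ⨂[K]^a E) (y : ⨂[K]^b E) :
    ι a x * ι b y = ι (a + b) (mulEquiv (x ⊗ₜ y)) :=
  DirectSum.of_mul_of (A := (TensorPower K · E)) x y

theorem lof_cast {a b : ℕ} (h : a = b) (x : ⨂[K]^a E) : ι b (cast K E h x) = ι a x := by
  subst h
  rw [cast_refl, LinearEquiv.refl_apply]

theorem map_lof_map_mulEquiv_map₂_mk {a b : ℕ} (A : Submodule K (⨂[K]^a E))
    (B : Submodule K (⨂[K]^b E)) :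
    ((Submodule.map₂ (mk K _ _) A B).map (mulEquiv (R := K) (M := E)).toLinearMap).map
        (ι (a + b)) = A.map (ι a) * B.map (ι b) := by
  rw [Submodule.map_map₂, Submodule.map_map₂, Submodule.mul_eq_map₂, Submodule.map₂_map_map]
  congr 1
  exact LinearMap.ext fun x => LinearMap.ext fun y => (lof_mul_lof x y).symm

theorem range_lof_mul_range_lof (a b : ℕ) :
    LinearMap.range (ι a) * LinearMap.range (ι b) = LinearMap.range (ι (a + b)) := by
  rw [← Submodule.map_top, ← Submodule.map_top, ← map_lof_map_mulEquiv_map₂_mk,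
    map₂_mk_top_top_eq_top, Submodule.map_top, LinearEquiv.range, Submodule.map_top]

theorem range_lof_pow_succ (a k : ℕ) :
    LinearMap.range (ι a) ^ (k + 1) = LinearMap.range (ι (a * (k + 1))) := by
  induction k with
  | zero => rw [zero_add, pow_one, Nat.mul_one]
  | succ k ih => rw [pow_succ, ih, range_lof_mul_range_lof, Nat.mul_add_one a (k + 1)]

theorem map_lof_subRight {N : ℕ} (R : Submodule K (⨂[K]^N E)) (r : ℕ) :
    (subRight K E R r).map (ι (N + r)) = R.map (ι N) * LinearMap.range (ι r) := by
  rw [subRight, LinearMap.range_comp, LinearMap.rTensor, TensorProduct.range_map,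
    Submodule.range_subtype, LinearMap.range_id, map_lof_map_mulEquiv_map₂_mk, Submodule.map_top]

theorem map_lof_subLeft {N : ℕ} (R : Submodule K (⨂[K]^N E)) (r : ℕ) :
    (subLeft K E R r).map (ι (N + r)) = LinearMap.range (ι r) * R.map (ι N) := by
  have hcast : ι (N + r) ∘ₗ (cast K E (add_comm r N)).toLinearMap = ι (r + N) :=
    LinearMap.ext (lof_cast _)
  rw [subLeft, LinearMap.range_comp, LinearMap.range_comp, ← Submodule.map_comp, hcast,
    LinearMap.lTensor, TensorProduct.range_map, Submodule.range_subtype, LinearMap.range_id,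
    map_lof_map_mulEquiv_map₂_mk, Submodule.map_top]

variable {N : ℕ}

noncomputable def leftContraction (f : Module.Dual K (⨂[K]^N E)) (j : ℕ) : 𝒯 →ₗ[K] 𝒯 :=
  ι j ∘ₗ (TensorProduct.lid K _).toLinearMap ∘ₗ f.rTensor _
    ∘ₗ (mulEquiv (n := N) (m := j)).symm.toLinearMap
    ∘ₗ DirectSum.component K ℕ (TensorPower K · E) (N + j)

theorem leftContraction_lof_mul (f : Module.Dual K (⨂[K]^N E)) (x : ⨂[K]^N E) {j : ℕ}
    {w : 𝒯} (hw : w ∈ LinearMap.range (ι j)) : leftContraction f j (ι N x * w) = f x • w := by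
  obtain ⟨y, rfl⟩ := hw
  simp [leftContraction, lof_mul_lof]

theorem map_leftContraction_mul_le (f : Module.Dual K (⨂[K]^N E)) {j : ℕ} {P : Submodule K 𝒯}
    (hP : P ≤ LinearMap.range (ι j)) :
    (LinearMap.range (ι N) * P).map (leftContraction f j) ≤ P := by
  rw [Submodule.map_le_iff_le_comap, Submodule.mul_le]
  rintro _ ⟨x, rfl⟩ w hw
  rw [Submodule.mem_comap, leftContraction_lof_mul f x (hP hw)]
  exact P.smul_mem _ hw

theorem range_lof_le_map_leftContraction {f : Module.Dual K (⨂[K]^N E)} {x : ⨂[K]^N E}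
    (hfx : f x = 1) {Q : Submodule K 𝒯} (hx : ι N x ∈ Q) (j : ℕ) :
    LinearMap.range (ι j) ≤ (Q * LinearMap.range (ι j)).map (leftContraction f j) := by
  intro w hw
  refine ⟨ι N x * w, Submodule.mul_mem_mul hx hw, ?_⟩
  rw [leftContraction_lof_mul f x hw, hfx, one_smul]

theorem range_lof_le_mul_of_commute {R : Submodule K (⨂[K]^N E)} (hR : R ≠ ⊥) {s : ℕ}
    (h : R.map (ι N) * LinearMap.range (ι (N + s)) = LinearMap.range (ι (N + s)) * R.map (ι N)) :
    LinearMap.range (ι (N + s)) ≤ LinearMap.range (ι s) * R.map (ι N) := by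
  obtain ⟨x, hxR, hx0⟩ := R.ne_bot_iff.mp hR
  obtain ⟨f, hfx⟩ := Module.Projective.exists_dual_eq_one K hx0
  have hle : LinearMap.range (ι s) * R.map (ι N) ≤ LinearMap.range (ι (N + s)) :=
    (mul_le_mul_right LinearMap.map_le_range _).trans
      ((range_lof_mul_range_lof s N).trans_le (add_comm s N ▸ le_rfl))
  calc LinearMap.range (ι (N + s))
      ≤ (R.map (ι N) * LinearMap.range (ι (N + s))).map (leftContraction f (N + s)) :=
        range_lof_le_map_leftContraction hfx (Submodule.mem_map_of_mem hxR) _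
    _ = (LinearMap.range (ι N) * (LinearMap.range (ι s) * R.map (ι N))).map
          (leftContraction f (N + s)) := by
        rw [h, ← range_lof_mul_range_lof, _root_.mul_assoc]
    _ ≤ LinearMap.range (ι s) * R.map (ι N) := map_leftContraction_mul_le f hle

variable [FiniteDimensional K E]

theorem finrank_eq (n : ℕ) : Module.finrank K (⨂[K]^n E) = Module.finrank K E ^ n := by
  rw [Module.finrank_eq_card_basis (Basis.piTensorProduct fun _ => Module.finBasis K E),
    Fintype.card_fun, Fintype.card_fin, Fintype.card_fin]

theorem eq_top_of_range_lof_le_mul {R : Submodule K (⨂[K]^N E)} (hR : R ≠ ⊥) {s : ℕ}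
    (h : LinearMap.range (ι (N + s)) ≤ LinearMap.range (ι s) * R.map (ι N)) : R = ⊤ := by
  set d := Module.finrank K E
  have hrange (n : ℕ) : Module.finrank K (LinearMap.range (ι n)) = d ^ n := by
    rw [LinearMap.finrank_range_of_inj (DirectSum.of_injective n), finrank_eq]
  have : Module.Free K (LinearMap.range (ι s)) :=
    .of_equiv (LinearEquiv.ofInjective _ (DirectSum.of_injective s))
  have : Module.Free K (R.map (ι N)) :=
    .of_equiv (R.equivMapOfInjective _ (DirectSum.of_injective N))
  have : Module.Finite K ↥(LinearMap.range (ι s) * R.map (ι N)) := by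
    rw [← Submodule.mulMap_range]; infer_instance
  have hcount : d ^ s * d ^ N ≤ d ^ s * Module.finrank K R :=
    calc d ^ s * d ^ N = Module.finrank K (LinearMap.range (ι (N + s))) := by
          rw [hrange, pow_add, mul_comm]
      _ ≤ Module.finrank K ↥(LinearMap.range (ι s) * R.map (ι N)) := Submodule.finrank_mono h
      _ ≤ d ^ s * Module.finrank K (R.map (ι N)) :=
          (Submodule.finrank_mul_le K _ _).trans_eq (by rw [hrange])
      _ ≤ d ^ s * Module.finrank K R := Nat.mul_le_mul_left _ (Submodule.finrank_map_le _ _)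
  have hdim : d ^ N ≤ Module.finrank K R := by
    rcases Nat.eq_zero_or_pos d with hd | hd
    · rw [hd]
      exact (zero_pow_le_one N).trans (Submodule.one_le_finrank_iff.mpr hR)
    · exact Nat.le_of_mul_le_mul_left hcount (pow_pos hd s)
  rw [← finrank_eq] at hdim
  exact Submodule.eq_top_of_finrank_eq ((Submodule.finrank_le R).antisymm hdim)

end TensorPower

theorem statement12 [FiniteDimensional K E] (N r : ℕ) (hr : 1 ≤ r)
    (R : Submodule K (⨂[K]^N E))
    (h : subRight K E R r = subLeft K E R r) :
    R = ⊥ ∨ R = ⊤ := by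
  refine or_iff_not_imp_left.mpr fun hR => ?_
  have hcomm : Commute (R.map (ι N)) (LinearMap.range (ι r)) := by
    rw [Commute, SemiconjBy, ← TensorPower.map_lof_subRight, ← TensorPower.map_lof_subLeft, h]
  obtain ⟨s, hs⟩ : ∃ s, r * (N + 1) = N + s := Nat.exists_eq_add_of_le (by nlinarith)
  have hpow := hcomm.pow_right (N + 1)
  rw [Commute, SemiconjBy, TensorPower.range_lof_pow_succ, hs] at hpow
  exact TensorPower.eq_top_of_range_lof_le_mul hR
    (TensorPower.range_lof_le_mul_of_commute hR hpow)
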